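/- A bilateral weighted shift S with positive bounded weights has the single-valued extension property if and only if r₂⁻(S) ≤ r₃⁺(S), where r₂⁻(S) = liminf (1/β_{−n})^{1/n} and r₃⁺(S) = limsup β_n^{1/n}. -/

import Mathlib

/-!
If `S x = μ x` with `x ≠ 0`, then `μ ≠ 0` and the coefficients of `x` are forced to be
`xₙ = βₙ μ⁻ⁿ x₀` with `x₀ ≠ 0`; since they tend to zero in both directions, the root test gives
`r₃⁺(S) ≤ |μ| ≤ r₂⁻(S)`. So if `r₂⁻(S) ≤ r₃⁺(S)` every eigenvalue lies on the circle
`|μ| = r₃⁺(S)`, which has empty interior, whereas a local analytic solution of `(S - λ) f(λ) = 0`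
that is nonzero at one point is nonzero on a neighbourhood of it, all of whose points are
eigenvalues. Conversely, if `r₃⁺(S) < r₂⁻(S)`, the Laurent series `f(λ) = ∑ βₙ λ⁻ⁿ eₙ`
converges absolutely and locally uniformly on the annulus `r₃⁺(S) < |λ| < r₂⁻(S)`, so it is
holomorphic there, solves `(S - λ) f(λ) = 0` and has `⟪e₀, f(λ)⟫ = 1`.
-/

open Filter

section Defs

variable {X : Type*} [NormedAddCommGroup X] [NormedSpace ℂ X]

/-- `T` has the single-valued extension property. -/
def HasSVEP (T : X →L[ℂ] X) : Prop :=
  ∀ U : Set ℂ, IsOpen U → ∀ f : ℂ → X, AnalyticOnNhd ℂ f U →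
    (∀ z ∈ U, (T - z • (1 : X →L[ℂ] X)) (f z) = 0) → ∀ z ∈ U, f z = 0

end Defs

variable {H : Type*} [NormedAddCommGroup H] [InnerProductSpace ℂ H] [CompleteSpace H]

open Topology

section RootTest

variable {a : ℕ → ℝ} {x : ℝ}

theorem eventually_le_pow_of_limsup_rpow_inv_lt (ha : ∀ n, 0 ≤ a n)
    (hbdd : IsBoundedUnder (· ≤ ·) atTop fun n => a n ^ (n : ℝ)⁻¹)
    (h : atTop.limsup (fun n => a n ^ (n : ℝ)⁻¹) < x) :
    ∀ᶠ n in atTop, a n ≤ x ^ n := by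
  filter_upwards [eventually_lt_of_limsup_lt h hbdd, eventually_ne_atTop 0] with n hn hn0
  have hx : 0 ≤ x := (Real.rpow_nonneg (ha n) _).trans hn.le
  rw [← Real.rpow_natCast, ← Real.rpow_inv_le_iff_of_pos (ha n) hx (by positivity)]
  exact hn.le

theorem limsup_rpow_inv_le_of_eventually_le_pow (ha : ∀ n, 0 ≤ a n) (hx : 0 ≤ x)
    (h : ∀ᶠ n in atTop, a n ≤ x ^ n) :
    atTop.limsup (fun n => a n ^ (n : ℝ)⁻¹) ≤ x := by
  refine limsup_le_of_le (isBoundedUnder_of ⟨0, fun n => Real.rpow_nonneg (ha n) _⟩ :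
    IsBoundedUnder (· ≥ ·) atTop _).isCoboundedUnder_le ?_
  filter_upwards [h, eventually_ne_atTop 0] with n hn hn0
  rwa [Real.rpow_inv_le_iff_of_pos (ha n) hx (by positivity), Real.rpow_natCast]

theorem eventually_pow_le_of_lt_liminf_rpow_inv (ha : ∀ n, 0 ≤ a n) (hx : 0 ≤ x)
    (h : x < atTop.liminf (fun n => a n ^ (n : ℝ)⁻¹)) :
    ∀ᶠ n in atTop, x ^ n ≤ a n := by
  have hbdd : IsBoundedUnder (· ≥ ·) atTop fun n => a n ^ (n : ℝ)⁻¹ :=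
    isBoundedUnder_of ⟨0, fun n => Real.rpow_nonneg (ha n) _⟩
  filter_upwards [eventually_lt_of_lt_liminf h hbdd, eventually_ne_atTop 0] with n hn hn0
  rw [← Real.rpow_natCast, ← Real.le_rpow_inv_iff_of_pos hx (ha n) (by positivity)]
  exact hn.le

theorem le_liminf_rpow_inv_of_eventually_pow_le (ha : ∀ n, 0 ≤ a n) (hx : 0 ≤ x)
    (hbdd : IsBoundedUnder (· ≤ ·) atTop fun n => a n ^ (n : ℝ)⁻¹)
    (h : ∀ᶠ n in atTop, x ^ n ≤ a n) :
    x ≤ atTop.liminf (fun n => a n ^ (n : ℝ)⁻¹) := by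
  refine le_liminf_of_le hbdd.isCoboundedUnder_ge ?_
  filter_upwards [h, eventually_ne_atTop 0] with n hn hn0
  rwa [Real.le_rpow_inv_iff_of_pos hx (ha n) (by positivity), Real.rpow_natCast]

theorem isBoundedUnder_rpow_inv_of_le_pow (ha : ∀ n, 0 ≤ a n) {C : ℝ} (hC : 0 ≤ C)
    (h : ∀ n, a n ≤ C ^ n) : IsBoundedUnder (· ≤ ·) atTop fun n => a n ^ (n : ℝ)⁻¹ := by
  refine isBoundedUnder_of_eventually_le (a := C) ?_
  filter_upwards [eventually_ne_atTop 0] with n hn0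
  rw [Real.rpow_inv_le_iff_of_pos (ha n) hC (by positivity), Real.rpow_natCast]
  exact h n

end RootTest

theorem summable_of_eventually_le_geometric {a : ℕ → ℝ} (ha : ∀ n, 0 ≤ a n) {q : ℝ}
    (hq₀ : 0 ≤ q) (hq₁ : q < 1) (h : ∀ᶠ n in atTop, a n ≤ q ^ n) : Summable a :=
  (summable_geometric_of_lt_one hq₀ hq₁).of_norm_bounded_eventually_nat <| by
    filter_upwards [h] with n hn
    rwa [Real.norm_of_nonneg (ha n)]

theorem zpow_le_zpow_add_zpow {a b t : ℝ} (ha : 0 < a) (hat : a ≤ t) (htb : t ≤ b) (n : ℤ) :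
    t ^ n ≤ a ^ n + b ^ n := by
  rcases le_or_gt 0 n with hn | hn
  · have := zpow_le_zpow_left₀ hn (ha.le.trans hat) htb
    linarith [zpow_pos ha n]
  · have h : a ^ (-n) ≤ t ^ (-n) := zpow_le_zpow_left₀ (by omega) ha.le hat
    rw [zpow_neg, zpow_neg] at h
    have := (inv_le_inv₀ (zpow_pos ha n) (zpow_pos (ha.trans_le hat) n)).mp h
    linarith [zpow_pos (ha.trans_le (hat.trans htb)) n]

theorem analyticOnNhd_tsum_zpow_smul {F : Type*} [NormedAddCommGroup F] [NormedSpace ℂ F]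
    [CompleteSpace F] {v : ℤ → F} {r₁ r₂ : ℝ} (hr₁ : 0 < r₁)
    (h₁ : Summable fun n => ‖v n‖ * r₁ ^ n) (h₂ : Summable fun n => ‖v n‖ * r₂ ^ n) :
    AnalyticOnNhd ℂ (fun z : ℂ => ∑' n, z ^ n • v n) ((‖·‖) ⁻¹' Set.Ioo r₁ r₂) := by
  have hU : IsOpen ((‖·‖) ⁻¹' Set.Ioo r₁ r₂ : Set ℂ) := isOpen_Ioo.preimage continuous_norm
  refine DifferentiableOn.analyticOnNhd ?_ hU
  refine Complex.differentiableOn_tsum_of_summable_norm (h₁.add h₂) (fun n z hz => ?_) hU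
    fun n z hz => ?_
  · have hz0 : z ≠ 0 := norm_pos_iff.mp (hr₁.trans hz.1)
    exact ((differentiableAt_zpow.mpr (Or.inl hz0)).smul_const (v n)).differentiableWithinAt
  · rw [norm_smul, norm_zpow, mul_comm, ← mul_add]
    exact mul_le_mul_of_nonneg_left
      (zpow_le_zpow_add_zpow hr₁ hz.1.le hz.2.le n) (norm_nonneg _)

namespace HilbertBasis

variable {ι 𝕜 E : Type*} [RCLike 𝕜] [NormedAddCommGroup E] [InnerProductSpace 𝕜 E]

theorem repr_apply_of_hasSum (b : HilbertBasis ι 𝕜 E) {c : ι → 𝕜} {x : E}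
    (h : HasSum (fun i => c i • b i) x) (i : ι) : b.repr x i = c i := by
  classical
  have h' := h.mapL (innerSL 𝕜 (b i))
  simp only [innerSL_apply_apply, inner_smul_right, orthonormal_iff_ite.mp b.orthonormal,
    mul_ite, mul_one, mul_zero] at h'
  rw [b.repr_apply_apply]
  simpa using h'.unique (hasSum_single i fun j hj => if_neg (Ne.symm hj))

theorem tendsto_norm_repr_cofinite (b : HilbertBasis ι 𝕜 E) (x : E) :
    Tendsto (fun i => ‖b.repr x i‖) cofinite (𝓝 0) := by
  have h := (Real.continuous_sqrt.tendsto 0).comp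
    (b.orthonormal.inner_products_summable (x := x)).tendsto_cofinite_zero
  simpa [Function.comp_def, Real.sqrt_sq (norm_nonneg _), b.repr_apply_apply] using h

end HilbertBasis

theorem eq_mul_apply_zero_of_recurrence {K : Type*} [Field K] {a c g : ℤ → K} {μ : K}
    (ha : ∀ n, a n ≠ 0) (hμ : μ ≠ 0) (hc : ∀ n, a n * c n = μ * c (n + 1))
    (hg : ∀ n, a n * g n = μ * g (n + 1)) (hg₀ : g 0 = 1) (n : ℤ) : c n = g n * c 0 := by
  induction n using Int.induction_on with
  | zero => rw [hg₀, one_mul]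
  | succ k ih =>
    apply mul_left_cancel₀ hμ
    rw [← hc, ih, ← mul_assoc, hg, mul_assoc]
  | pred k ih =>
    apply mul_left_cancel₀ (ha (-k - 1))
    rw [hc, sub_add_cancel, ih, ← mul_assoc, ← mul_assoc, hg, sub_add_cancel]

theorem hasSVEP_of_interior_setOf_hasEigenvalue_eq_empty {X : Type*} [NormedAddCommGroup X]
    [NormedSpace ℂ X] (T : X →L[ℂ] X)
    (h : interior {μ : ℂ | Module.End.HasEigenvalue (T : Module.End ℂ X) μ} = ∅) :
    HasSVEP T := by
  intro U hU f hf hker z hz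
  by_contra hfz
  have hnhds : ∀ᶠ w in 𝓝 z, Module.End.HasEigenvalue (T : Module.End ℂ X) w := by
    filter_upwards [(hf z hz).continuousAt.eventually_ne hfz, hU.mem_nhds hz] with w hfw hw
    have hker' := hker w hw
    rw [sub_apply, smul_apply, one_apply_eq_self, sub_eq_zero] at hker'
    exact Module.End.hasEigenvalue_of_hasEigenvector
      ⟨Module.End.mem_eigenspace_iff.mpr hker', hfw⟩
  have hint := mem_interior_iff_mem_nhds.mpr hnhds
  rw [h] at hint
  exact hint

/-- The paper's `βₙ`, normalised by `β₀ = 1` and `βₙ₊₁ = ωₙ βₙ`: for `n > 0` it is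
`ω₀ ⋯ ωₙ₋₁` and `β₋ₙ = (ω₋ₙ ⋯ ω₋₁)⁻¹` (the case `Int.negSucc n` is `-(n + 1)`). -/
noncomputable def shiftWeight (ω : ℤ → ℝ) : ℤ → ℝ
  | (n : ℕ) => ∏ i ∈ Finset.range n, ω i
  | Int.negSucc n => (∏ i ∈ Finset.range (n + 1), ω (-(i : ℤ) - 1))⁻¹

section ShiftWeight

variable {ω : ℤ → ℝ}

theorem shiftWeight_natCast (n : ℕ) : shiftWeight ω n = ∏ i ∈ Finset.range n, ω i := rfl

@[simp] theorem shiftWeight_zero : shiftWeight ω 0 = 1 := shiftWeight_natCast 0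

theorem shiftWeight_neg_natCast (n : ℕ) :
    shiftWeight ω (-n) = (∏ i ∈ Finset.range n, ω (-(i : ℤ) - 1))⁻¹ := by
  cases n with
  | zero => simp
  | succ n => rfl

theorem shiftWeight_add_one (hω : ∀ n, ω n ≠ 0) (n : ℤ) :
    shiftWeight ω (n + 1) = ω n * shiftWeight ω n := by
  rcases n with m | m
  · rw [Int.ofNat_eq_natCast, ← Nat.cast_succ, shiftWeight_natCast, shiftWeight_natCast,
      Finset.prod_range_succ, mul_comm]
  · have hm : Int.negSucc m = -((m + 1 : ℕ) : ℤ) := rfl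
    rw [hm, show -((m + 1 : ℕ) : ℤ) + 1 = -(m : ℤ) by push_cast; ring, shiftWeight_neg_natCast,
      shiftWeight_neg_natCast, Finset.prod_range_succ, mul_inv,
      show -((m + 1 : ℕ) : ℤ) = -(m : ℤ) - 1 by push_cast; ring, mul_left_comm,
      mul_inv_cancel₀ (hω _), mul_one]

theorem shiftWeight_pos (hω : ∀ n, 0 < ω n) (n : ℤ) : 0 < shiftWeight ω n := by
  cases n with
  | ofNat n => exact Finset.prod_pos fun i _ => hω i
  | negSucc n => exact inv_pos.mpr (Finset.prod_pos fun i _ => hω _)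

theorem inv_shiftWeight_neg_natCast (n : ℕ) :
    (shiftWeight ω (-n))⁻¹ = ∏ i ∈ Finset.range n, ω (-(i : ℤ) - 1) := by
  rw [shiftWeight_neg_natCast, inv_inv]

theorem shiftWeight_mul_zpow_neg_recurrence (hω : ∀ n, ω n ≠ 0) {z : ℂ} (hz : z ≠ 0) (n : ℤ) :
    (ω n : ℂ) * (shiftWeight ω n * z ^ (-n)) = z * (shiftWeight ω (n + 1) * z ^ (-(n + 1))) := by
  rw [shiftWeight_add_one hω, neg_add, zpow_add₀ hz, zpow_neg_one]
  push_cast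
  field_simp

end ShiftWeight

/-- `r₃⁺(S) = limsup βₙ^(1/n)`. -/
noncomputable def innerRadius (ω : ℤ → ℝ) : ℝ :=
  atTop.limsup fun n : ℕ => (∏ i ∈ Finset.range n, ω (i : ℤ)) ^ ((n : ℝ)⁻¹)

/-- `r₂⁻(S) = liminf (1/β₋ₙ)^(1/n)`, the product being `1/β₋ₙ`. -/
noncomputable def outerRadius (ω : ℤ → ℝ) : ℝ :=
  atTop.liminf fun n : ℕ => (∏ i ∈ Finset.range n, ω (-(i : ℤ) - 1)) ^ ((n : ℝ)⁻¹)

section Radii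

variable {ω : ℤ → ℝ} {x : ℝ}

theorem isBoundedUnder_prod_rpow_inv (hpos : ∀ n, 0 < ω n) (hbd : BddAbove (Set.range ω))
    (f : ℕ → ℤ) :
    IsBoundedUnder (· ≤ ·) atTop
      fun n : ℕ => (∏ i ∈ Finset.range n, ω (f i)) ^ ((n : ℝ)⁻¹) := by
  obtain ⟨C, hC⟩ := hbd
  have hωC : ∀ n, ω n ≤ C := fun n => hC ⟨n, rfl⟩
  refine isBoundedUnder_rpow_inv_of_le_pow (fun n => Finset.prod_nonneg fun i _ => (hpos _).le)
    ((hpos 0).le.trans (hωC 0)) fun n => ?_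
  calc ∏ i ∈ Finset.range n, ω (f i) ≤ ∏ _i ∈ Finset.range n, C :=
        Finset.prod_le_prod (fun i _ => (hpos _).le) fun i _ => hωC _
    _ = C ^ n := by rw [Finset.prod_const, Finset.card_range]

theorem innerRadius_nonneg (hpos : ∀ n, 0 < ω n) (hbd : BddAbove (Set.range ω)) :
    0 ≤ innerRadius ω :=
  le_limsup_of_frequently_le
    (Frequently.of_forall fun _ => Real.rpow_nonneg (Finset.prod_nonneg fun _ _ => (hpos _).le) _)
    (isBoundedUnder_prod_rpow_inv hpos hbd _)

theorem eventually_shiftWeight_le_pow (hpos : ∀ n, 0 < ω n) (hbd : BddAbove (Set.range ω))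
    (h : innerRadius ω < x) : ∀ᶠ n : ℕ in atTop, shiftWeight ω n ≤ x ^ n :=
  eventually_le_pow_of_limsup_rpow_inv_lt (fun n => (shiftWeight_pos hpos n).le)
    (isBoundedUnder_prod_rpow_inv hpos hbd _) h

theorem innerRadius_le_of_eventually_le_pow (hpos : ∀ n, 0 < ω n) (hx : 0 ≤ x)
    (h : ∀ᶠ n : ℕ in atTop, shiftWeight ω n ≤ x ^ n) : innerRadius ω ≤ x :=
  limsup_rpow_inv_le_of_eventually_le_pow (fun n => (shiftWeight_pos hpos n).le) hx h

theorem eventually_pow_le_inv_shiftWeight_neg (hpos : ∀ n, 0 < ω n) (hx : 0 ≤ x)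
    (h : x < outerRadius ω) : ∀ᶠ n : ℕ in atTop, x ^ n ≤ (shiftWeight ω (-n))⁻¹ := by
  simp only [inv_shiftWeight_neg_natCast]
  exact eventually_pow_le_of_lt_liminf_rpow_inv
    (fun n => Finset.prod_nonneg fun i _ => (hpos _).le) hx h

theorem le_outerRadius_of_eventually_pow_le (hpos : ∀ n, 0 < ω n) (hbd : BddAbove (Set.range ω))
    (hx : 0 ≤ x) (h : ∀ᶠ n : ℕ in atTop, x ^ n ≤ (shiftWeight ω (-n))⁻¹) :
    x ≤ outerRadius ω := by
  simp only [inv_shiftWeight_neg_natCast] at h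
  exact le_liminf_rpow_inv_of_eventually_pow_le
    (fun n => Finset.prod_nonneg fun i _ => (hpos _).le) hx
    (isBoundedUnder_prod_rpow_inv hpos hbd _) h

theorem summable_shiftWeight_mul_zpow (hpos : ∀ n, 0 < ω n) (hbd : BddAbove (Set.range ω))
    {r : ℝ} (hr₁ : innerRadius ω < r) (hr₂ : r < outerRadius ω) :
    Summable fun n : ℤ => shiftWeight ω n * r ^ (-n) := by
  have hr : 0 < r := (innerRadius_nonneg hpos hbd).trans_lt hr₁
  have hterm : ∀ n, 0 ≤ shiftWeight ω n * r ^ (-n) :=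
    fun n => mul_nonneg (shiftWeight_pos hpos n).le (zpow_pos hr _).le
  apply Summable.of_nat_of_neg
  · obtain ⟨x, hx₁, hxr⟩ := exists_between hr₁
    have hx : 0 < x := (innerRadius_nonneg hpos hbd).trans_lt hx₁
    refine summable_of_eventually_le_geometric (fun n => hterm n) (div_nonneg hx.le hr.le)
      ((div_lt_one hr).mpr hxr) ?_
    filter_upwards [eventually_shiftWeight_le_pow hpos hbd hx₁] with n hn
    rw [zpow_neg, zpow_natCast, div_pow, div_eq_mul_inv]
    exact mul_le_mul_of_nonneg_right hn (by positivity)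
  · obtain ⟨y, hry, hy₂⟩ := exists_between hr₂
    have hy : 0 < y := hr.trans hry
    refine summable_of_eventually_le_geometric (fun n => hterm _) (div_nonneg hr.le hy.le)
      ((div_lt_one hy).mpr hry) ?_
    filter_upwards [eventually_pow_le_inv_shiftWeight_neg hpos hy.le hy₂] with n hn
    rw [neg_neg, zpow_natCast, div_pow, div_eq_inv_mul]
    exact mul_le_mul_of_nonneg_right
      ((le_inv_comm₀ (by positivity) (shiftWeight_pos hpos _)).mp hn) (by positivity)

end Radii

section WeightedShift

variable {E : Type*} [NormedAddCommGroup E] [InnerProductSpace ℂ E]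

def IsWeightedShift (S : E →L[ℂ] E) (e : HilbertBasis ℤ ℂ E) (ω : ℤ → ℝ) : Prop :=
  ∀ n, S (e n) = (ω n : ℂ) • e (n + 1)

/-- The paper's `f(λ) = ∑ βₙ λ⁻ⁿ eₙ`; a junk value of `tsum` off the annulus
`innerRadius ω < |λ| < outerRadius ω`, where the series need not converge. -/
noncomputable def shiftEigenvector (e : HilbertBasis ℤ ℂ E) (ω : ℤ → ℝ) (z : ℂ) : E :=
  ∑' n : ℤ, ((shiftWeight ω n : ℂ) * z ^ (-n)) • e n

variable {S : E →L[ℂ] E} {e : HilbertBasis ℤ ℂ E} {ω : ℤ → ℝ} {x : E} {μ : ℂ}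

namespace IsWeightedShift

theorem weight_le_opNorm (hS : IsWeightedShift S e ω) (n : ℤ) : ω n ≤ ‖S‖ := by
  have h := S.le_opNorm (e n)
  rw [hS n, norm_smul, e.orthonormal.1, e.orthonormal.1, mul_one, mul_one, Complex.norm_real,
    Real.norm_eq_abs] at h
  exact (le_abs_self _).trans h

theorem bddAbove_range (hS : IsWeightedShift S e ω) : BddAbove (Set.range ω) :=
  ⟨‖S‖, by rintro _ ⟨n, rfl⟩; exact hS.weight_le_opNorm n⟩

theorem repr_apply_add_one (hS : IsWeightedShift S e ω) (x : E) (n : ℤ) :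
    e.repr (S x) (n + 1) = ω n * e.repr x n := by
  have h := (e.hasSum_repr x).mapL S
  simp only [map_smul, hS _, smul_smul] at h
  have h' : HasSum (fun m => ((ω (m - 1) : ℂ) * e.repr x (m - 1)) • e m) (S x) := by
    rw [← (Equiv.addRight (1 : ℤ)).hasSum_iff]
    simpa [Function.comp_def, mul_comm] using h
  simpa using e.repr_apply_of_hasSum h' (n + 1)

theorem apply_eq_smul_iff (hS : IsWeightedShift S e ω) :
    S x = μ • x ↔ ∀ n, ω n * e.repr x n = μ * e.repr x (n + 1) := by
  constructor
  · intro h n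
    rw [← hS.repr_apply_add_one, h, map_smul]
    rfl
  · intro h
    apply e.repr.injective
    ext m
    obtain ⟨n, rfl⟩ : ∃ n, m = n + 1 := ⟨m - 1, by ring⟩
    rw [hS.repr_apply_add_one, h n, map_smul]
    rfl

theorem repr_eq_of_apply_eq_smul (hS : IsWeightedShift S e ω) (hω : ∀ n, ω n ≠ 0) (hμ : μ ≠ 0)
    (hx : S x = μ • x) (n : ℤ) : e.repr x n = shiftWeight ω n * μ ^ (-n) * e.repr x 0 :=
  eq_mul_apply_zero_of_recurrence (fun n => Complex.ofReal_ne_zero.mpr (hω n)) hμ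
    (hS.apply_eq_smul_iff.mp hx) (shiftWeight_mul_zpow_neg_recurrence hω hμ) (by simp) n

theorem eq_zero_of_apply_eq_zero (hS : IsWeightedShift S e ω) (hω : ∀ n, ω n ≠ 0)
    (hx : S x = 0) : x = 0 := by
  have h := hS.apply_eq_smul_iff.mp (hx.trans (zero_smul ℂ x).symm)
  apply e.repr.injective
  ext n
  have hn := h n
  rw [zero_mul, mul_eq_zero] at hn
  simpa using hn.resolve_left (Complex.ofReal_ne_zero.mpr (hω n))

theorem ne_zero_of_hasEigenvector (hS : IsWeightedShift S e ω) (hω : ∀ n, ω n ≠ 0)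
    (hx : Module.End.HasEigenvector (S : Module.End ℂ E) μ x) : μ ≠ 0 := by
  rintro rfl
  exact hx.2 (hS.eq_zero_of_apply_eq_zero hω (by simpa using hx.apply_eq_smul))

theorem tendsto_shiftWeight_mul_zpow_cofinite (hS : IsWeightedShift S e ω) (hpos : ∀ n, 0 < ω n)
    (hx : Module.End.HasEigenvector (S : Module.End ℂ E) μ x) :
    Tendsto (fun n : ℤ => shiftWeight ω n * ‖μ‖ ^ (-n)) cofinite (𝓝 0) := by
  have hω : ∀ n, ω n ≠ 0 := fun n => (hpos n).ne'
  have hμ := hS.ne_zero_of_hasEigenvector hω hx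
  have hcoeff := hS.repr_eq_of_apply_eq_smul hω hμ hx.apply_eq_smul
  have hx₀ : e.repr x 0 ≠ 0 := by
    intro h₀
    apply hx.2
    apply e.repr.injective
    ext n
    simp [hcoeff n, h₀]
  have hnorm : ∀ n, ‖e.repr x n‖ / ‖e.repr x 0‖ = shiftWeight ω n * ‖μ‖ ^ (-n) := fun n => by
    rw [hcoeff n, norm_mul, norm_mul, norm_zpow, Complex.norm_real,
      Real.norm_of_nonneg (shiftWeight_pos hpos n).le,
      mul_div_cancel_right₀ _ (norm_ne_zero_iff.mpr hx₀)]
  simpa only [hnorm, zero_div] using (e.tendsto_norm_repr_cofinite x).div_const ‖e.repr x 0‖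

theorem norm_mem_Icc_of_hasEigenvalue (hS : IsWeightedShift S e ω) (hpos : ∀ n, 0 < ω n)
    (h : Module.End.HasEigenvalue (S : Module.End ℂ E) μ) :
    ‖μ‖ ∈ Set.Icc (innerRadius ω) (outerRadius ω) := by
  obtain ⟨x, hx⟩ := h.exists_hasEigenvector
  have hμ : 0 < ‖μ‖ := norm_pos_iff.mpr (hS.ne_zero_of_hasEigenvector (fun n => (hpos n).ne') hx)
  have hle : ∀ᶠ n : ℤ in cofinite, shiftWeight ω n * ‖μ‖ ^ (-n) ≤ 1 :=
    (hS.tendsto_shiftWeight_mul_zpow_cofinite hpos hx).eventually_le_const one_pos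
  have hnat : Tendsto (fun n : ℕ => (n : ℤ)) atTop cofinite :=
    Nat.cofinite_eq_atTop ▸ Nat.cast_injective.tendsto_cofinite
  have hneg : Tendsto (fun n : ℕ => -(n : ℤ)) atTop cofinite :=
    Nat.cofinite_eq_atTop ▸ (neg_injective.comp Nat.cast_injective).tendsto_cofinite
  constructor
  · refine innerRadius_le_of_eventually_le_pow hpos hμ.le ?_
    filter_upwards [hnat.eventually hle] with n hn
    rwa [zpow_neg, zpow_natCast, mul_inv_le_iff₀ (by positivity), one_mul] at hn
  · refine le_outerRadius_of_eventually_pow_le hpos hS.bddAbove_range hμ.le ?_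
    filter_upwards [hneg.eventually hle] with n hn
    rw [neg_neg, zpow_natCast] at hn
    rwa [← mul_one (shiftWeight ω _)⁻¹, le_inv_mul_iff₀ (shiftWeight_pos hpos _)]

theorem hasSVEP_of_outerRadius_le_innerRadius (hS : IsWeightedShift S e ω) (hpos : ∀ n, 0 < ω n)
    (h : outerRadius ω ≤ innerRadius ω) : HasSVEP S := by
  refine hasSVEP_of_interior_setOf_hasEigenvalue_eq_empty S (Set.subset_empty_iff.mp ?_)
  calc interior {μ | Module.End.HasEigenvalue (S : Module.End ℂ E) μ}
      ⊆ interior (Metric.sphere 0 (innerRadius ω)) := interior_mono fun μ hμ => by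
        obtain ⟨h₁, h₂⟩ := hS.norm_mem_Icc_of_hasEigenvalue hpos hμ
        rw [mem_sphere_zero_iff_norm]
        linarith
    _ = ∅ := interior_sphere' _ _

end IsWeightedShift

section Eigenvector

variable [CompleteSpace E] {z : ℂ}

theorem hasSum_shiftEigenvector (hpos : ∀ n, 0 < ω n) (hbd : BddAbove (Set.range ω))
    (hz : ‖z‖ ∈ Set.Ioo (innerRadius ω) (outerRadius ω)) :
    HasSum (fun n => ((shiftWeight ω n : ℂ) * z ^ (-n)) • e n) (shiftEigenvector e ω z) := by
  refine Summable.hasSum (Summable.of_norm ?_)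
  refine (summable_shiftWeight_mul_zpow hpos hbd hz.1 hz.2).congr fun n => ?_
  rw [norm_smul, e.orthonormal.1, mul_one, norm_mul, norm_zpow, Complex.norm_real,
    Real.norm_of_nonneg (shiftWeight_pos hpos n).le]

theorem repr_shiftEigenvector (hpos : ∀ n, 0 < ω n) (hbd : BddAbove (Set.range ω))
    (hz : ‖z‖ ∈ Set.Ioo (innerRadius ω) (outerRadius ω)) (n : ℤ) :
    e.repr (shiftEigenvector e ω z) n = shiftWeight ω n * z ^ (-n) :=
  e.repr_apply_of_hasSum (hasSum_shiftEigenvector hpos hbd hz) n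

theorem shiftEigenvector_ne_zero (hpos : ∀ n, 0 < ω n) (hbd : BddAbove (Set.range ω))
    (hz : ‖z‖ ∈ Set.Ioo (innerRadius ω) (outerRadius ω)) : shiftEigenvector e ω z ≠ 0 := by
  intro h
  simpa [h] using repr_shiftEigenvector (e := e) hpos hbd hz 0

theorem IsWeightedShift.apply_shiftEigenvector (hS : IsWeightedShift S e ω)
    (hpos : ∀ n, 0 < ω n) (hz : ‖z‖ ∈ Set.Ioo (innerRadius ω) (outerRadius ω)) :
    S (shiftEigenvector e ω z) = z • shiftEigenvector e ω z := by
  have hbd := hS.bddAbove_range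
  have hz₀ : z ≠ 0 := norm_pos_iff.mp ((innerRadius_nonneg hpos hbd).trans_lt hz.1)
  refine hS.apply_eq_smul_iff.mpr fun n => ?_
  rw [repr_shiftEigenvector hpos hbd hz, repr_shiftEigenvector hpos hbd hz]
  exact shiftWeight_mul_zpow_neg_recurrence (fun n => (hpos n).ne') hz₀ n

theorem analyticOnNhd_shiftEigenvector (hpos : ∀ n, 0 < ω n) (hbd : BddAbove (Set.range ω)) :
    AnalyticOnNhd ℂ (shiftEigenvector e ω)
      ((‖·‖) ⁻¹' Set.Ioo (innerRadius ω) (outerRadius ω)) := by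
  have hsum : ∀ r ∈ Set.Ioo (innerRadius ω) (outerRadius ω),
      Summable fun n : ℤ => ‖(shiftWeight ω (-n) : ℂ) • e (-n)‖ * r ^ n := by
    intro r hr
    refine ((summable_shiftWeight_mul_zpow hpos hbd hr.1 hr.2).comp_injective neg_injective).congr
      fun n => ?_
    rw [norm_smul, e.orthonormal.1, mul_one, Complex.norm_real,
      Real.norm_of_nonneg (shiftWeight_pos hpos _).le, Function.comp_apply, neg_neg]
  have hf : shiftEigenvector e ω =
      fun z => ∑' n : ℤ, z ^ n • ((shiftWeight ω (-n) : ℂ) • e (-n)) := by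
    funext z
    rw [shiftEigenvector, ← (Equiv.neg ℤ).tsum_eq]
    simp only [Equiv.neg_apply, neg_neg, smul_smul, mul_comm]
  intro z hz
  obtain ⟨r₁, h₁, hr₁⟩ := exists_between hz.1
  obtain ⟨r₂, hr₂, h₂⟩ := exists_between hz.2
  rw [hf]
  exact analyticOnNhd_tsum_zpow_smul ((innerRadius_nonneg hpos hbd).trans_lt h₁)
    (hsum r₁ ⟨h₁, hr₁.trans (hr₂.trans h₂)⟩) (hsum r₂ ⟨h₁.trans (hr₁.trans hr₂), h₂⟩)
    z ⟨hr₁, hr₂⟩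

theorem IsWeightedShift.not_hasSVEP_of_innerRadius_lt_outerRadius (hS : IsWeightedShift S e ω)
    (hpos : ∀ n, 0 < ω n) (h : innerRadius ω < outerRadius ω) : ¬HasSVEP S := by
  intro hsvep
  obtain ⟨r, hr⟩ := Set.nonempty_Ioo.mpr h
  have hr₀ : 0 ≤ r := (innerRadius_nonneg hpos hS.bddAbove_range).trans hr.1.le
  have hrU : ‖(r : ℂ)‖ ∈ Set.Ioo (innerRadius ω) (outerRadius ω) := by
    rwa [Complex.norm_real, Real.norm_of_nonneg hr₀]
  refine shiftEigenvector_ne_zero (e := e) hpos hS.bddAbove_range hrU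
    (hsvep _ (isOpen_Ioo.preimage continuous_norm) _
      (analyticOnNhd_shiftEigenvector hpos hS.bddAbove_range) (fun z hz => ?_) _ hrU)
  rw [sub_apply, smul_apply, one_apply_eq_self, hS.apply_shiftEigenvector hpos hz, sub_self]

end Eigenvector

end WeightedShift

theorem bilateral_svep_iff_general (S : H →L[ℂ] H)
    (e : HilbertBasis ℤ ℂ H) (ω : ℤ → ℝ) (hpos : ∀ n, 0 < ω n)
    (hS : ∀ n, S (e n) = (ω n : ℂ) • e (n + 1)) :
    HasSVEP S ↔
      (atTop.liminf fun n : ℕ =>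
          (∏ i ∈ Finset.range n, ω (-(i : ℤ) - 1)) ^ ((n : ℝ)⁻¹)) ≤
        (atTop.limsup fun n : ℕ =>
          (∏ i ∈ Finset.range n, ω (i : ℤ)) ^ ((n : ℝ)⁻¹)) := by
  change HasSVEP S ↔ outerRadius ω ≤ innerRadius ω
  have hS' : IsWeightedShift S e ω := hS
  exact ⟨fun h => not_lt.mp fun hlt => hS'.not_hasSVEP_of_innerRadius_lt_outerRadius hpos hlt h,
    hS'.hasSVEP_of_outerRadius_le_innerRadius hpos⟩

/-- A bilateral weighted shift `S` with positive bounded weights has the single-valued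
extension property if and only if `r₂⁻(S) ≤ r₃⁺(S)`, where
`r₂⁻(S) = liminf (1/β₋ₙ)^(1/n) = liminf (ω (-n) ⋯ ω (-1))^(1/n)` and
`r₃⁺(S) = limsup (βₙ)^(1/n) = limsup (ω 0 ⋯ ω (n-1))^(1/n)`. -/
theorem bilateral_svep_iff (S : H →L[ℂ] H)
    (e : HilbertBasis ℤ ℂ H) (ω : ℤ → ℝ) (hpos : ∀ n, 0 < ω n)
    (hbd : ∃ M : ℝ, ∀ n, ω n ≤ M)
    (hS : ∀ n, S (e n) = (ω n : ℂ) • e (n + 1)) :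
    HasSVEP S ↔
      (atTop.liminf fun n : ℕ =>
          (∏ i ∈ Finset.range n, ω (-(i : ℤ) - 1)) ^ ((n : ℝ)⁻¹)) ≤
        (atTop.limsup fun n : ℕ =>
          (∏ i ∈ Finset.range n, ω (i : ℤ)) ^ ((n : ℝ)⁻¹)) :=
  bilateral_svep_iff_general S e ω hpos hS
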